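/- Suppose f is holomorphic on the strip Ω_{a,b}, of exponential type, and Lebesgue integrable on some line ℝ - it₀ with t₀ ∈ (a,b). Then for every t ∈ (a,b) with f integrable on ℝ - it, the Gauss–Weierstrass regularized integrals converge: lim_{ε → 0⁺} ∫_{ℝ - it} e^{-ε z²} f(z) dz = ∫_{ℝ - it₀} f(z) dz. -/

import Mathlib

open Complex Set MeasureTheory Filter Topology
open scoped Interval Real

/-! For `ε > 0` the Gaussian factor `e^{-εz²}` decays like `e^{-εx²}` on the strip, which beats the
exponential growth of `f`; Cauchy's theorem on long rectangles then shows that the regularized integral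
does not depend on the line. On the line `ℝ - it₀`, where `f` is integrable, dominated convergence
lets `ε → 0⁺`. Local boundedness of `C` makes the growth bound uniform between the two lines. -/

theorem IsCompact.bddAbove_image_of_isBoundedUnder {X α : Type*} [TopologicalSpace X]
    [Preorder α] [IsDirected α (· ≤ ·)] [Nonempty α] {K : Set X} {g : X → α}
    (hK : IsCompact K) (hg : ∀ x ∈ K, IsBoundedUnder (· ≤ ·) (𝓝 x) g) :
    BddAbove (g '' K) := by
  refine hK.induction_on (p := fun S => BddAbove (g '' S)) (by simp)
    (fun _ _ hst ht => ht.mono (image_mono hst))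
    (fun _ _ hs ht => by simpa only [image_union] using hs.union ht) fun x hx => ?_
  obtain ⟨M, hM⟩ := hg x hx
  exact ⟨{y | g y ≤ M}, mem_nhdsWithin_of_mem_nhds hM, ⟨M, by rintro _ ⟨y, hy, rfl⟩; exact hy⟩⟩

theorem tendsto_exp_mul_abs_sub_mul_sq_cocompact (s : ℝ) {ε : ℝ} (hε : 0 < ε) :
    Tendsto (fun x : ℝ => rexp (s * |x| - ε * x ^ 2)) (cocompact ℝ) (𝓝 0) := by
  have hlin : Tendsto (fun r : ℝ => s + -(ε * r)) atTop atBot :=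
    tendsto_atBot_add_const_left _ s
      (tendsto_neg_atTop_atBot.comp (tendsto_id.const_mul_atTop hε))
  have hquad : Tendsto (fun r : ℝ => r * (s + -(ε * r))) atTop atBot :=
    tendsto_id.atTop_mul_atBot₀ hlin
  refine (Real.tendsto_exp_atBot.comp (hquad.comp tendsto_norm_cocompact_atTop)).congr fun x => ?_
  simp only [Function.comp_apply, Real.norm_eq_abs, ← sq_abs x]
  ring_nf

theorem integral_sub_mul_I_eq_of_differentiableOn {E : Type*} [NormedAddCommGroup E]
    [NormedSpace ℂ E] [CompleteSpace E] {g : ℂ → E} {t₁ t₂ : ℝ} {φ : ℝ → ℝ}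
    (hg : DifferentiableOn ℂ g {z : ℂ | -z.im ∈ [[t₁, t₂]]})
    (hφ : Tendsto φ (cocompact ℝ) (𝓝 0))
    (hbound : ∀ x : ℝ, ∀ t ∈ [[t₁, t₂]], ‖g (x - t * I)‖ ≤ φ x)
    (h₁ : Integrable fun x : ℝ => g (x - t₁ * I)) (h₂ : Integrable fun x : ℝ => g (x - t₂ * I)) :
    ∫ x : ℝ, g (x - t₁ * I) = ∫ x : ℝ, g (x - t₂ * I) := by
  have hneg : ∀ y ∈ [[-t₁, -t₂]], -y ∈ [[t₁, t₂]] := fun y hy => by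
    rw [← image_neg_uIcc] at hy
    obtain ⟨t, ht, rfl⟩ := hy
    rwa [neg_neg]
  let V : ℝ → E := fun x => ∫ y in -t₁..-t₂, g (x + y * I)
  have hV : Tendsto V (cocompact ℝ) (𝓝 0) := by
    have hφ' := hφ.mul_const |-t₂ - -t₁|
    rw [zero_mul] at hφ'
    refine squeeze_zero_norm (fun x => ?_) hφ'
    refine intervalIntegral.norm_integral_le_of_norm_le_const fun y hy => ?_
    simpa [sub_eq_add_neg] using hbound x (-y) (hneg y (Ioc_subset_Icc_self hy))
  have hrect : ∀ R : ℝ, ((∫ x in -R..R, g (x - t₁ * I)) - ∫ x in -R..R, g (x - t₂ * I)) +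
      I • V R - I • V (-R) = 0 := by
    intro R
    have := integral_boundary_rect_eq_zero_of_differentiableOn g ⟨-R, -t₁⟩ ⟨R, -t₂⟩
      (hg.mono fun z hz => hneg _ hz.2)
    simpa [V, sub_eq_add_neg] using this
  have hlim := (((intervalIntegral_tendsto_integral h₁ tendsto_neg_atTop_atBot tendsto_id).sub
    (intervalIntegral_tendsto_integral h₂ tendsto_neg_atTop_atBot tendsto_id)).add
    ((hV.mono_left atTop_le_cocompact).const_smul I)).sub
    (((hV.mono_left atBot_le_cocompact).comp tendsto_neg_atTop_atBot).const_smul I)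
  simp only [Function.comp_def, id, hrect, smul_zero, add_zero, sub_zero] at hlim
  exact sub_eq_zero.mp (tendsto_nhds_unique hlim tendsto_const_nhds)

theorem norm_cexp_neg_mul_sq_sub_mul_I (ε x t : ℝ) :
    ‖cexp (-ε * (x - t * I) ^ 2)‖ = rexp (-ε * (x ^ 2 - t ^ 2)) := by
  rw [Complex.norm_exp]
  congr 1
  simp [sq]

theorem integrable_cexp_neg_mul_sq_sub_mul_I_mul {ε : ℝ} (hε : 0 ≤ ε) (t : ℝ) {h : ℝ → ℂ}
    (hh : Integrable h) :
    Integrable fun x : ℝ => cexp (-ε * (x - t * I) ^ 2) * h x := by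
  refine hh.bdd_mul (c := rexp (ε * t ^ 2)) (by fun_prop) (ae_of_all _ fun x => ?_)
  rw [norm_cexp_neg_mul_sq_sub_mul_I, Real.exp_le_exp]
  nlinarith [sq_nonneg x]

theorem tendsto_integral_cexp_neg_mul_sq_sub_mul_I_mul (t : ℝ) {h : ℝ → ℂ} (hh : Integrable h) :
    Tendsto (fun ε : ℝ => ∫ x : ℝ, cexp (-ε * (x - t * I) ^ 2) * h x) (𝓝[>] 0)
      (𝓝 (∫ x : ℝ, h x)) := by
  refine tendsto_integral_filter_of_dominated_convergence (fun x => rexp (t ^ 2) * ‖h x‖)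
    (Eventually.of_forall fun ε => by fun_prop) ?_ (hh.norm.const_mul _) (ae_of_all _ fun x => ?_)
  · filter_upwards [Ioc_mem_nhdsGT zero_lt_one] with ε hε
    refine ae_of_all _ fun x => ?_
    rw [norm_mul, norm_cexp_neg_mul_sq_sub_mul_I]
    gcongr
    nlinarith [sq_nonneg x, sq_nonneg t, hε.1, hε.2]
  · have hcont : Continuous fun ε : ℝ => cexp (-ε * (x - t * I) ^ 2) * h x := by fun_prop
    simpa using (hcont.tendsto 0).mono_left nhdsWithin_le_nhds

theorem integral_cexp_neg_mul_sq_mul_eq {f : ℂ → ℂ} {s M t₁ t₂ ε : ℝ}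
    (hf : DifferentiableOn ℂ f {z : ℂ | -z.im ∈ [[t₁, t₂]]})
    (hbound : ∀ x : ℝ, ∀ t ∈ [[t₁, t₂]], ‖f (x - t * I)‖ ≤ M * rexp (s * |x|))
    (h₁ : Integrable fun x : ℝ => f (x - t₁ * I)) (h₂ : Integrable fun x : ℝ => f (x - t₂ * I))
    (hε : 0 < ε) :
    ∫ x : ℝ, cexp (-ε * (x - t₁ * I) ^ 2) * f (x - t₁ * I) =
      ∫ x : ℝ, cexp (-ε * (x - t₂ * I) ^ 2) * f (x - t₂ * I) := by
  refine integral_sub_mul_I_eq_of_differentiableOn (g := fun z => cexp (-ε * z ^ 2) * f z)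
    (φ := fun x => M * rexp (ε * (t₁ ^ 2 + t₂ ^ 2)) * rexp (s * |x| - ε * x ^ 2))
    ((Differentiable.differentiableOn (by fun_prop)).mul hf) ?_ (fun x t ht => ?_)
    (integrable_cexp_neg_mul_sq_sub_mul_I_mul hε.le t₁ h₁)
    (integrable_cexp_neg_mul_sq_sub_mul_I_mul hε.le t₂ h₂)
  · simpa using (tendsto_exp_mul_abs_sub_mul_sq_cocompact s hε).const_mul
      (M * rexp (ε * (t₁ ^ 2 + t₂ ^ 2)))
  have ht_sq : t ^ 2 ≤ t₁ ^ 2 + t₂ ^ 2 := by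
    rcases mem_uIcc.1 ht with ⟨h1, h2⟩ | ⟨h1, h2⟩ <;>
      nlinarith [mul_nonneg (sub_nonneg.2 h1) (sub_nonneg.2 h2), sq_nonneg (t₁ + t₂)]
  have hfM := hbound x t ht
  calc ‖cexp (-ε * (x - t * I) ^ 2) * f (x - t * I)‖
      ≤ rexp (-ε * (x ^ 2 - t ^ 2)) * (M * rexp (s * |x|)) := by
        rw [norm_mul, norm_cexp_neg_mul_sq_sub_mul_I]
        gcongr
    _ ≤ rexp (ε * (t₁ ^ 2 + t₂ ^ 2) - ε * x ^ 2) * (M * rexp (s * |x|)) := by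
        gcongr
        · exact (norm_nonneg _).trans hfM
        · nlinarith
    _ = M * rexp (ε * (t₁ ^ 2 + t₂ ^ 2)) * rexp (s * |x| - ε * x ^ 2) := by
        rw [Real.exp_sub, Real.exp_sub]
        field_simp

theorem gauss_weierstrass_summation_general (a b s t₀ : ℝ) (C : ℝ → ℝ) (f : ℂ → ℂ)
    (hf : DifferentiableOn ℂ f {z : ℂ | z.im ∈ Set.Ioo (-b) (-a)})
    (hC : ∀ t ∈ Set.Ioo a b, ∃ ε > 0, ∃ M : ℝ, ∀ t' ∈ Set.Ioo a b,
      |t' - t| < ε → C t' ≤ M)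
    (hgrowth : ∀ (x : ℝ), ∀ t ∈ Set.Ioo a b,
      ‖f (x - t * Complex.I)‖ ≤ C t * Real.exp (s * |x|))
    (ht₀ : t₀ ∈ Set.Ioo a b)
    (hint₀ : Integrable (fun x : ℝ => f (x - t₀ * Complex.I))) :
    ∀ t ∈ Set.Ioo a b, Integrable (fun x : ℝ => f (x - t * Complex.I)) →
      Tendsto
        (fun ε : ℝ =>
          ∫ x : ℝ, Complex.exp (-ε * (x - t * Complex.I) ^ 2) * f (x - t * Complex.I))
        (𝓝[>] 0)
        (𝓝 (∫ x : ℝ, f (x - t₀ * Complex.I))) := by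
  intro t ht hint
  have hsub : [[t₀, t]] ⊆ Ioo a b := ordConnected_Ioo.uIcc_subset ht₀ ht
  obtain ⟨M, hM⟩ : BddAbove (C '' [[t₀, t]]) :=
    isCompact_uIcc.bddAbove_image_of_isBoundedUnder fun u hu => by
      obtain ⟨δ, hδ, M, hM⟩ := hC u (hsub hu)
      refine isBoundedUnder_of_eventually_le (a := M) ?_
      filter_upwards [isOpen_Ioo.mem_nhds (hsub hu), Metric.ball_mem_nhds u hδ] with v hv hvu
      exact hM v hv (by rwa [Metric.mem_ball, Real.dist_eq] at hvu)
  have hdiff : DifferentiableOn ℂ f {z : ℂ | -z.im ∈ [[t₀, t]]} :=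
    hf.mono fun z hz => ⟨by linarith [(hsub hz).2], by linarith [(hsub hz).1]⟩
  have hbound : ∀ x : ℝ, ∀ u ∈ [[t₀, t]], ‖f (x - u * I)‖ ≤ M * rexp (s * |x|) :=
    fun x u hu => (hgrowth x u (hsub hu)).trans <| by
      gcongr
      exact hM (mem_image_of_mem C hu)
  refine (tendsto_integral_cexp_neg_mul_sq_sub_mul_I_mul t₀ hint₀).congr' ?_
  filter_upwards [self_mem_nhdsWithin] with ε hε
  exact integral_cexp_neg_mul_sq_mul_eq hdiff hbound hint₀ hint hε

/-- Gauss–Weierstrass summation: if `f` is holomorphic of exponential type on the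
strip `Ω_{a,b}` and integrable on some line `ℝ - i t₀`, then for every line
`ℝ - i t` of the strip the Gauss–Weierstrass regularized integrals converge to
the integral over `ℝ - i t₀`. -/
theorem gauss_weierstrass_summation (a b s t₀ : ℝ) (C : ℝ → ℝ) (f : ℂ → ℂ)
    (hab : a < b)
    (hf : DifferentiableOn ℂ f {z : ℂ | z.im ∈ Set.Ioo (-b) (-a)})
    (hC : ∀ t ∈ Set.Ioo a b, ∃ ε > 0, ∃ M : ℝ, ∀ t' ∈ Set.Ioo a b,
      |t' - t| < ε → C t' ≤ M)
    (hgrowth : ∀ (x : ℝ), ∀ t ∈ Set.Ioo a b,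
      ‖f (x - t * Complex.I)‖ ≤ C t * Real.exp (s * |x|))
    (ht₀ : t₀ ∈ Set.Ioo a b)
    (hint₀ : Integrable (fun x : ℝ => f (x - t₀ * Complex.I))) :
    ∀ t ∈ Set.Ioo a b, Integrable (fun x : ℝ => f (x - t * Complex.I)) →
      Tendsto
        (fun ε : ℝ =>
          ∫ x : ℝ, Complex.exp (-ε * (x - t * Complex.I) ^ 2) * f (x - t * Complex.I))
        (𝓝[>] 0)
        (𝓝 (∫ x : ℝ, f (x - t₀ * Complex.I))) :=
  gauss_weierstrass_summation_general a b s t₀ C f hf hC hgrowth ht₀ hint₀
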